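/- arXiv:math/0204128 — 2 statements merged into one kernel-verified Lean document; each statement's English description precedes it below -/
import Mathlib

section
/- If a poset P contains a subset order-isomorphic to ℕ (an infinite ascending chain) and a subset order-isomorphic to the dual of ℕ (an infinite descending chain), then P is not sub-representable. -/
/-!
A sub-representation `g` turns embeddability into inclusion, so `g A ∩ g D` is, up to mutual
embeddability, the greatest common lower bound of any two subsets `A` and `D` in the embeddability
order. For an ascending chain `A ≅ ℕ` and a descending chain `D ≅ ℕᵒᵈ` this lower bound embeds into
both `ℕ` and `ℕᵒᵈ`, hence is finite; but every finite chain embeds into both `A` and `D`.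
-/

def SubRepresentable (α : Type*) [PartialOrder α] : Prop :=
  ∃ g : Set α → Set α,
    (∀ P₁ P₂ : Set α, Nonempty (↥P₁ ↪o ↥P₂) ↔ g P₁ ⊆ g P₂) ∧
    ∀ P₁ : Set α, Nonempty (↥P₁ ↪o ↥(g P₁)) ∧ Nonempty (↥(g P₁) ↪o ↥P₁)

open Set

def Set.inclusionOrderEmbedding {α : Type*} [LE α] {s t : Set α} (h : s ⊆ t) : s ↪o t where
  toFun := inclusion h
  inj' := inclusion_injective h
  map_rel_iff' := Iff.rfl

theorem SubRepresentable.exists_embeddability_meet {α : Type*} [PartialOrder α]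
    (hα : SubRepresentable α) (P Q : Set α) :
    ∃ Y : Set α, Nonempty (Y ↪o P) ∧ Nonempty (Y ↪o Q) ∧
      ∀ C : Set α, Nonempty (C ↪o P) → Nonempty (C ↪o Q) → Nonempty (C ↪o Y) := by
  obtain ⟨g, hg_subset, hg_equiv⟩ := hα
  refine ⟨g P ∩ g Q, ?_, ?_, fun C hCP hCQ => ?_⟩
  · exact ⟨(inclusionOrderEmbedding inter_subset_left).trans (hg_equiv P).2.some⟩
  · exact ⟨(inclusionOrderEmbedding inter_subset_right).trans (hg_equiv Q).2.some⟩
  · have hC : g C ⊆ g P ∩ g Q :=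
      subset_inter ((hg_subset C P).1 hCP) ((hg_subset C Q).1 hCQ)
    exact ⟨(hg_equiv C).1.some.trans (inclusionOrderEmbedding hC)⟩

theorem finite_of_orderEmbedding_of_orderEmbedding {β γ δ : Type*} [Preorder β] [LinearOrder γ]
    [WellFoundedLT γ] [Preorder δ] [WellFoundedGT δ] (e₁ : β ↪o γ) (e₂ : β ↪o δ) : Finite β := by
  have : WellFoundedGT β := e₂.wellFoundedGT
  have : WellFoundedGT (range e₁) := e₁.orderIso.symm.toOrderEmbedding.wellFoundedGT
  have : Finite (range e₁) := Finite.of_wellFoundedLT_wellFoundedGT _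
  exact Finite.of_equiv _ e₁.orderIso.symm.toEquiv

theorem exists_fin_chain_embedding_into_ranges {α : Type*} [Preorder α] (eP : ℕ ↪o α)
    (eQ : ℕᵒᵈ ↪o α) (n : ℕ) :
    ∃ C : Set α, Nonempty (Fin n ↪o C) ∧ Nonempty (C ↪o range eP) ∧ Nonempty (C ↪o range eQ) := by
  let eC : Fin n ↪o α := (Fin.valOrderEmb n).trans eP
  let toNatDual : Fin n ↪o ℕᵒᵈ :=
    Fin.revOrderIso.symm.toOrderEmbedding.trans (Fin.valOrderEmb n).dual
  exact ⟨range eC, ⟨eC.orderIso.toOrderEmbedding⟩,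
    ⟨eC.orderIso.symm.toOrderEmbedding.trans
      ((Fin.valOrderEmb n).trans eP.orderIso.toOrderEmbedding)⟩,
    ⟨eC.orderIso.symm.toOrderEmbedding.trans (toNatDual.trans eQ.orderIso.toOrderEmbedding)⟩⟩

theorem not_subrep_of_ascending_and_descending (α : Type*) [PartialOrder α]
    (hup : ∃ f : ℕ → α, StrictMono f) (hdown : ∃ g : ℕ → α, StrictAnti g) :
    ¬ SubRepresentable α := by
  intro hα
  obtain ⟨f, hf⟩ := hup
  obtain ⟨d, hd⟩ := hdown
  let eP : ℕ ↪o α := OrderEmbedding.ofStrictMono f hf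
  let eQ : ℕᵒᵈ ↪o α := OrderEmbedding.ofStrictMono (d ∘ OrderDual.ofDual) hd.dual_left
  obtain ⟨Y, ⟨eYP⟩, ⟨eYQ⟩, hY⟩ := hα.exists_embeddability_meet (range eP) (range eQ)
  have : Finite Y := finite_of_orderEmbedding_of_orderEmbedding
    (eYP.trans eP.orderIso.symm.toOrderEmbedding) (eYQ.trans eQ.orderIso.symm.toOrderEmbedding)
  obtain ⟨C, ⟨eC⟩, hCP, hCQ⟩ := exists_fin_chain_embedding_into_ranges eP eQ (Nat.card Y + 1)
  obtain ⟨eCY⟩ := hY C hCP hCQ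
  have hcard := Nat.card_le_card_of_injective _ (eC.trans eCY).injective
  rw [Nat.card_fin] at hcard
  omega
end

section
/- Let P be the disjoint union of finitely many well-ordered chains (pairwise incomparable). Then P is sub-representable. -/
open Sigma

/-!
An order embedding between subsets of `Σ i, β i` maps each (chain) component into a single
component, and distinct nonempty components into distinct ones. So, for well-ordered chains, `S`
embeds into `T` iff a permutation of the components matches each component of `S` with one of `T`
of at least its order type, i.e. iff the sorted tuple of component order types of `S` lies
pointwise below that of `T`. The representative `canonicalRep S` realises this sorted tuple by
initial segments, the `k`-th smallest type of `S` placed in the `k`-th shortest chain; inclusion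
of representatives is then exactly the pointwise order of sorted tuples, and `S` and
`canonicalRep S` have the same sorted tuple.
-/

open Ordinal

universe u

section SortedTuples
variable {n : ℕ} {α : Type*} [LinearOrder α]

theorem Monotone.le_of_le_comp_perm {f g : Fin n → α} (hf : Monotone f) (hg : Monotone g)
    {σ : Equiv.Perm (Fin n)} (hσ : ∀ i, f i ≤ g (σ i)) : f ≤ g := by
  intro k
  by_contra! hk
  have hmaps : Set.MapsTo σ (Finset.Ici k) (Finset.Ioi k) := fun j hj => by
    simp only [Finset.coe_Ici, Finset.coe_Ioi, Set.mem_Ici, Set.mem_Ioi] at hj ⊢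
    -- otherwise `g (σ j) ≤ g k < f k ≤ f j`
    exact lt_of_not_ge fun hjk => ((hg hjk).trans_lt hk).not_ge ((hf hj).trans (hσ j))
  have := Finset.card_le_card_of_injOn σ hmaps σ.injective.injOn
  simp only [Fin.card_Ici, Fin.card_Ioi] at this
  omega

theorem exists_perm_le_iff_comp_sort_le (f g : Fin n → α) :
    (∃ σ : Equiv.Perm (Fin n), ∀ i, f i ≤ g (σ i)) ↔ f ∘ Tuple.sort f ≤ g ∘ Tuple.sort g := by
  constructor
  · rintro ⟨σ, hσ⟩
    refine (Tuple.monotone_sort f).le_of_le_comp_perm (Tuple.monotone_sort g)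
      (σ := (Tuple.sort f).trans (σ.trans (Tuple.sort g).symm)) fun i => ?_
    simpa using hσ (Tuple.sort f i)
  · intro h
    refine ⟨(Tuple.sort f).symm.trans (Tuple.sort g), fun i => ?_⟩
    simpa using h ((Tuple.sort f).symm i)

end SortedTuples

section SigmaChains
variable {ι : Type*} {β : ι → Type*}

theorem Sigma.exists_eq_mk_of_fst_eq {A : Type*} {f : A → Σ i, β i} {j : ι}
    (h : ∀ a, (f a).1 = j) : ∃ g : A → β j, ∀ a, f a = ⟨j, g a⟩ :=
  ⟨fun a => h a ▸ (f a).2, fun a => Sigma.ext (h a) (eqRec_heq _ _).symm⟩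

variable [∀ i, LinearOrder (β i)]

theorem Sigma.fst_eq_iff_le_or_le {x y : Σ i, β i} : x.1 = y.1 ↔ x ≤ y ∨ y ≤ x := by
  obtain ⟨i, a⟩ := x
  obtain ⟨j, b⟩ := y
  constructor
  · rintro (rfl : i = j)
    simpa only [Sigma.mk_le_mk_iff] using le_total a b
  · rintro (h | h)
    exacts [(Sigma.le_def.1 h).1, (Sigma.le_def.1 h).1.symm]

theorem OrderEmbedding.fst_eq_fst_iff {S T : Set (Σ i, β i)} (e : S ↪o T) {x y : S} :
    (e x).1.1 = (e y).1.1 ↔ x.1.1 = y.1.1 := by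
  simp only [Sigma.fst_eq_iff_le_or_le, Subtype.coe_le_coe, e.le_iff_le]

theorem exists_injOn_fiberwise_orderEmbedding {S T : Set (Σ i, β i)} (e : S ↪o T) :
    ∃ m : ι → ι, Set.InjOn m {i | (Sigma.mk i ⁻¹' S).Nonempty} ∧
      ∀ i, Nonempty (Sigma.mk i ⁻¹' S ↪o Sigma.mk (m i) ⁻¹' T) := by
  have hfiber : ∀ i, ∃ j, ∀ b (hb : b ∈ Sigma.mk i ⁻¹' S), (e ⟨⟨i, b⟩, hb⟩).1.1 = j := by
    intro i
    by_cases h : (Sigma.mk i ⁻¹' S).Nonempty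
    · obtain ⟨a, ha⟩ := h
      exact ⟨_, fun b hb => (OrderEmbedding.fst_eq_fst_iff e (y := ⟨⟨i, a⟩, ha⟩)).2 rfl⟩
    · exact ⟨i, fun b hb => (h ⟨b, hb⟩).elim⟩
  choose m hm using hfiber
  refine ⟨m, ?_, fun i => ?_⟩
  · rintro i ⟨a, ha⟩ j ⟨b, hb⟩ hij
    exact (OrderEmbedding.fst_eq_fst_iff e).1 ((hm i a ha).trans (hij.trans (hm j b hb).symm))
  · obtain ⟨g, hg⟩ := Sigma.exists_eq_mk_of_fst_eq
      (f := fun b : Sigma.mk i ⁻¹' S => (e ⟨⟨i, b⟩, b.2⟩ : Σ i, β i)) fun b => hm i b b.2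
    refine ⟨OrderEmbedding.ofMapLEIff (fun b => ⟨g b, ?_⟩) fun b b' => ?_⟩
    · change (⟨m i, g b⟩ : Σ i, β i) ∈ T
      rw [← hg]
      exact (e _).2
    · change g b ≤ g b' ↔ b ≤ b'
      rw [← Sigma.mk_le_mk_iff (i := m i), ← hg, ← hg, Subtype.coe_le_coe, e.le_iff_le,
        Subtype.mk_le_mk, Sigma.mk_le_mk_iff, Subtype.coe_le_coe]

theorem nonempty_orderEmbedding_of_fiberwise {S T : Set (Σ i, β i)} {σ : ι → ι}
    (hσ : σ.Injective) (e : ∀ i, Sigma.mk i ⁻¹' S ↪o Sigma.mk (σ i) ⁻¹' T) :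
    Nonempty (S ↪o T) := by
  refine ⟨OrderEmbedding.ofMapLEIff
    (fun x => ⟨⟨σ x.1.1, e x.1.1 ⟨x.1.2, x.2⟩⟩, (e x.1.1 ⟨x.1.2, x.2⟩).2⟩) ?_⟩
  rintro ⟨⟨i, a⟩, ha⟩ ⟨⟨j, b⟩, hb⟩
  change (⟨σ i, _⟩ : Σ i, β i) ≤ ⟨σ j, _⟩ ↔ (⟨i, a⟩ : Σ i, β i) ≤ ⟨j, b⟩
  obtain rfl | hij := eq_or_ne i j
  · simp only [Sigma.mk_le_mk_iff, Subtype.coe_le_coe, OrderEmbedding.le_iff_le, Subtype.mk_le_mk]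
  · exact iff_of_false (fun h => hσ.ne hij (Sigma.le_def.1 h).1) fun h => hij (Sigma.le_def.1 h).1

theorem nonempty_orderEmbedding_iff_exists_perm [Finite ι] {S T : Set (Σ i, β i)} :
    Nonempty (S ↪o T) ↔
      ∃ σ : Equiv.Perm ι, ∀ i, Nonempty (Sigma.mk i ⁻¹' S ↪o Sigma.mk (σ i) ⁻¹' T) := by
  constructor
  · rintro ⟨e⟩
    obtain ⟨m, hm, he⟩ := exists_injOn_fiberwise_orderEmbedding e
    obtain ⟨σ, hσ⟩ := Cardinal.extend_function_finite ⟨_, hm.injective⟩ ⟨Equiv.refl ι⟩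
    refine ⟨σ, fun i => ?_⟩
    by_cases hi : (Sigma.mk i ⁻¹' S).Nonempty
    · rw [show σ i = m i from hσ ⟨i, hi⟩]
      exact he i
    · have : IsEmpty (Sigma.mk i ⁻¹' S) :=
        Set.isEmpty_coe_sort.2 (Set.not_nonempty_iff_eq_empty.1 hi)
      exact ⟨OrderEmbedding.ofIsEmpty⟩
  · rintro ⟨σ, he⟩
    exact nonempty_orderEmbedding_of_fiberwise σ.injective fun i => (he i).some

end SigmaChains

section WellOrder
variable {α γ : Type u} [LinearOrder α] [WellFoundedLT α] [LinearOrder γ] [WellFoundedLT γ]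

theorem nonempty_orderEmbedding_iff_type_le : Nonempty (α ↪o γ) ↔ typeLT α ≤ typeLT γ := by
  rw [type_le_iff']
  exact ⟨fun ⟨f⟩ => ⟨f.ltEmbedding⟩,
    fun ⟨f⟩ => ⟨OrderEmbedding.ofStrictMono f fun _ _ => f.map_rel_iff.2⟩⟩

variable (α) in
def segmentOfType (o : Ordinal) : Set α := typein (α := α) (· < ·) ⁻¹' Set.Iio o

theorem type_segmentOfType {o : Ordinal} (h : o ≤ typeLT α) :
    typeLT (segmentOfType α o) = o := by
  obtain h | rfl := h.lt_or_eq
  · obtain ⟨a, rfl⟩ := typein_surj _ h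
    have : segmentOfType α (typein (α := α) (· < ·) a) = Set.Iio a := by
      ext b
      simp [segmentOfType]
    rw [this, type_Iio_lt]
  · have : segmentOfType α (typeLT α) = Set.univ := by
      ext b
      simpa [segmentOfType] using typein_lt_type _ b
    rw [this]
    exact (OrderIso.Set.univ (α := α)).ordinalType_congr

theorem segmentOfType_subset_segmentOfType_iff {o₁ o₂ : Ordinal} (h₁ : o₁ ≤ typeLT α)
    (h₂ : o₂ ≤ typeLT α) : segmentOfType α o₁ ⊆ segmentOfType α o₂ ↔ o₁ ≤ o₂ := by
  refine ⟨fun h => ?_, fun h => Set.preimage_mono (Set.Iio_subset_Iio h)⟩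
  simpa only [type_segmentOfType h₁, type_segmentOfType h₂] using type_mono h

end WellOrder

section Canonical
variable {n : ℕ} {β : Fin n → Type u} [∀ i, LinearOrder (β i)] [∀ i, WellFoundedLT (β i)]

variable (β) in
noncomputable def chainType (i : Fin n) : Ordinal := typeLT (β i)

noncomputable def fiberType (S : Set (Σ i, β i)) (i : Fin n) : Ordinal :=
  typeLT (Sigma.mk i ⁻¹' S)

noncomputable def sortedFiberType (S : Set (Σ i, β i)) : Fin n → Ordinal :=
  fiberType S ∘ Tuple.sort (fiberType S)

theorem nonempty_orderEmbedding_iff_sortedFiberType_le {S T : Set (Σ i, β i)} :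
    Nonempty (S ↪o T) ↔ sortedFiberType S ≤ sortedFiberType T := by
  simp only [nonempty_orderEmbedding_iff_exists_perm, nonempty_orderEmbedding_iff_type_le]
  exact exists_perm_le_iff_comp_sort_le (fiberType S) (fiberType T)

theorem sortedFiberType_le (S : Set (Σ i, β i)) :
    sortedFiberType S ≤ chainType β ∘ Tuple.sort (chainType β) :=
  (exists_perm_le_iff_comp_sort_le _ _).1 ⟨1, fun i => type_set_le (Sigma.mk i ⁻¹' S)⟩

noncomputable def canonicalRep (S : Set (Σ i, β i)) : Set (Σ i, β i) :=
  {x | x.2 ∈ segmentOfType (β x.1) (sortedFiberType S ((Tuple.sort (chainType β)).symm x.1))}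

theorem mk_preimage_canonicalRep (S : Set (Σ i, β i)) (k : Fin n) :
    Sigma.mk (Tuple.sort (chainType β) k) ⁻¹' canonicalRep S =
      segmentOfType _ (sortedFiberType S k) := by
  ext b
  simp only [canonicalRep, Set.mem_preimage, Set.mem_ofPred_eq, Equiv.symm_apply_apply]

theorem canonicalRep_subset_canonicalRep_iff {S T : Set (Σ i, β i)} :
    canonicalRep S ⊆ canonicalRep T ↔ sortedFiberType S ≤ sortedFiberType T := by
  have hfibers : canonicalRep S ⊆ canonicalRep T ↔
      ∀ i, Sigma.mk i ⁻¹' canonicalRep S ⊆ Sigma.mk i ⁻¹' canonicalRep T :=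
    ⟨fun h i => Set.preimage_mono h, fun h ⟨i, a⟩ ha => h i ha⟩
  rw [hfibers, ← (Tuple.sort (chainType β)).forall_congr_right]
  simp only [mk_preimage_canonicalRep, Pi.le_def,
    segmentOfType_subset_segmentOfType_iff (sortedFiberType_le S _) (sortedFiberType_le T _)]

theorem fiberType_canonicalRep (S : Set (Σ i, β i)) (k : Fin n) :
    fiberType (canonicalRep S) (Tuple.sort (chainType β) k) = sortedFiberType S k :=
  (OrderIso.setCongr _ _ (mk_preimage_canonicalRep S k)).ordinalType_congr.trans
    (type_segmentOfType (sortedFiberType_le S k))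

theorem sortedFiberType_canonicalRep (S : Set (Σ i, β i)) :
    sortedFiberType (canonicalRep S) = sortedFiberType S := by
  have : fiberType (canonicalRep S) =
      fiberType S ∘ ((Tuple.sort (chainType β)).symm.trans (Tuple.sort (fiberType S))) := by
    funext i
    obtain ⟨k, rfl⟩ := (Tuple.sort (chainType β)).surjective i
    rw [fiberType_canonicalRep, Function.comp_apply, Equiv.trans_apply, Equiv.symm_apply_apply]
    rfl
  rw [sortedFiberType, this, Tuple.comp_perm_comp_sort_eq_comp_sort, sortedFiberType]

end Canonical

theorem disjoint_union_of_wellOrdered_subrep (n : ℕ) (β : Fin n → Type*)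
    [∀ i, LinearOrder (β i)]
    (hwo : ∀ i, ∀ S : Set (β i), S.Nonempty → ∃ m ∈ S, ∀ s ∈ S, m ≤ s) :
    SubRepresentable (Σ i, β i) := by
  have (i : Fin n) : WellFoundedLT (β i) :=
    WellFounded.wellFoundedLT_iff_exists_minimal.2 fun S hS =>
      let ⟨m, hm, hmin⟩ := hwo i S hS
      ⟨m, hm, fun s hs _ => hmin s hs⟩
  refine ⟨canonicalRep, fun S T => ?_, fun S => ?_⟩
  · rw [nonempty_orderEmbedding_iff_sortedFiberType_le, canonicalRep_subset_canonicalRep_iff]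
  · simp only [nonempty_orderEmbedding_iff_sortedFiberType_le, sortedFiberType_canonicalRep,
      le_refl, and_self]
end
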